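/- arXiv:2108.12742 — 8 statements merged into one kernel-verified Lean document; each statement's English description precedes it below -/
import Mathlib

section
/- Let Δx > 0, let j ∈ ℤ, and let m, n ≥ 0 be natural numbers. Given arbitrary real numbers f_{j-m}, …, f_{j+n}, there exists a unique real polynomial P of degree at most m+n such that (1/Δx)∫_{I_k} P(x) dx = f_k for every k with j−m ≤ k ≤ j+n. -/
/-!
A polynomial whose integral over an interval vanishes has a root inside it (Rolle's theorem
applied to a primitive). So a polynomial of degree `≤ N` with vanishing averages over `N + 1`
pairwise disjoint cells has `N + 1` distinct roots and is zero: the averaging map from polynomials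
of degree `≤ N` to `ℝ^(N+1)` is injective, hence bijective by counting dimensions.
-/

open MeasureTheory Polynomial Set Finset
open scoped Function

theorem exists_mem_Ioo_eq_zero_of_intervalIntegral_eq_zero {f : ℝ → ℝ} (hf : Continuous f)
    {a b : ℝ} (hab : a < b) (h : ∫ x in a..b, f x = 0) : ∃ c ∈ Ioo a b, f c = 0 := by
  have hF : ∀ x, HasDerivAt (fun u => ∫ t in a..u, f t) (f x) x := fun x =>
    (hf.integral_hasStrictDerivAt a x).hasDerivAt
  refine exists_hasDerivAt_eq_zero hab (fun x _ => (hF x).continuousAt.continuousWithinAt) ?_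
    fun x _ => hF x
  simp [h]

theorem pairwise_disjoint_Ioo_intCast_mul_sub_add_half (Δx : ℝ) :
    Pairwise (Disjoint on fun k : ℤ => Ioo (k * Δx - Δx / 2) (k * Δx + Δx / 2)) := by
  convert pairwise_disjoint_Ioo_add_zsmul (-(Δx / 2)) Δx using 3 with k
  simp only [zsmul_eq_mul, Int.cast_add, Int.cast_one]
  congr 1 <;> ring

namespace Polynomial

section IntervalIntegrals

variable {ι : Type*} {a b : ι → ℝ}

noncomputable def intervalIntegralsMap (a b : ι → ℝ) : ℝ[X] →ₗ[ℝ] ι → ℝ where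
  toFun P i := ∫ x in a i..b i, P.eval x
  map_add' P Q := by
    funext i
    simp only [eval_add, Pi.add_apply]
    exact intervalIntegral.integral_add (P.continuous.intervalIntegrable _ _)
      (Q.continuous.intervalIntegrable _ _)
  map_smul' r P := by
    funext i
    simp only [eval_smul, smul_eq_mul, Pi.smul_apply, RingHom.id_apply]
    exact intervalIntegral.integral_const_mul r _

@[simp]
theorem intervalIntegralsMap_apply (P : ℝ[X]) (i : ι) :
    intervalIntegralsMap a b P i = ∫ x in a i..b i, P.eval x :=
  rfl

theorem eq_zero_of_degree_lt_of_intervalIntegral_eq_zero (s : Finset ι)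
    (hab : ∀ i ∈ s, a i < b i) (hs : (s : Set ι).PairwiseDisjoint fun i => Ioo (a i) (b i))
    {P : ℝ[X]} (hP : P.degree < #s) (h : ∀ i ∈ s, ∫ x in a i..b i, P.eval x = 0) : P = 0 := by
  choose! c hc hroot using fun i hi =>
    exists_mem_Ioo_eq_zero_of_intervalIntegral_eq_zero P.continuous (hab i hi) (h i hi)
  have hinj : Set.InjOn c s := by
    intro i hi i' hi' hcc
    by_contra hne
    exact Set.disjoint_left.mp (hs hi hi' hne) (hc i hi) (hcc ▸ hc i' hi')
  exact eq_zero_of_degree_lt_of_eval_index_eq_zero s hinj hP hroot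

theorem existsUnique_degree_lt_intervalIntegral_eq (s : Finset ι)
    (hab : ∀ i ∈ s, a i < b i) (hs : (s : Set ι).PairwiseDisjoint fun i => Ioo (a i) (b i))
    (g : ι → ℝ) :
    ∃! P : ℝ[X], P.degree < #s ∧ ∀ i ∈ s, ∫ x in a i..b i, P.eval x = g i := by
  set T := (intervalIntegralsMap (fun i : s => a i) (fun i : s => b i)).domRestrict
    (degreeLT ℝ #s)
  have hinj : Function.Injective T := by
    refine (injective_iff_map_eq_zero T).mpr fun p hp => Subtype.ext ?_
    refine eq_zero_of_degree_lt_of_intervalIntegral_eq_zero s hab hs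
      (mem_degreeLT.mp p.2) fun i hi => ?_
    simpa [T] using congrFun hp ⟨i, hi⟩
  have : FiniteDimensional ℝ (degreeLT ℝ #s) := (degreeLTEquiv ℝ #s).symm.finiteDimensional
  have hsurj : Function.Surjective T :=
    (LinearMap.injective_iff_surjective_of_finrank_eq_finrank
      (by simp [(degreeLTEquiv ℝ #s).finrank_eq])).mp hinj
  obtain ⟨p, hp⟩ := hsurj fun i => g i
  refine ⟨p, ⟨mem_degreeLT.mp p.2, fun i hi => by simpa [T] using congrFun hp ⟨i, hi⟩⟩, ?_⟩
  rintro Q ⟨hQ, hQg⟩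
  rw [← sub_eq_zero]
  refine eq_zero_of_degree_lt_of_intervalIntegral_eq_zero s hab hs
    (mem_degreeLT.mp (Submodule.sub_mem _ (mem_degreeLT.mpr hQ) p.2)) fun i hi => ?_
  simp only [eval_sub]
  rw [intervalIntegral.integral_sub (Q.continuous.intervalIntegrable _ _)
    ((p : ℝ[X]).continuous.intervalIntegrable _ _), hQg i hi]
  simpa [T, sub_eq_zero] using (congrFun hp ⟨i, hi⟩).symm

end IntervalIntegrals

end Polynomial

/-- Existence and uniqueness of the reconstruction polynomial of degree at most `m + n`
whose cell averages over the cells `I_k = [kΔx - Δx/2, kΔx + Δx/2]`, for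
`j - m ≤ k ≤ j + n`, match the prescribed data `f k`. -/
theorem eno_ao_reconstruction_exists_unique
    (Δx : ℝ) (hΔx : 0 < Δx) (j : ℤ) (m n : ℕ) (f : ℤ → ℝ) :
    ∃! P : Polynomial ℝ, P.degree ≤ (m + n : ℕ) ∧
      ∀ k : ℤ, j - m ≤ k → k ≤ j + n →
        (1 / Δx) * ∫ x in ((k : ℝ) * Δx - Δx / 2)..((k : ℝ) * Δx + Δx / 2), P.eval x
          = f k := by
  have hcard : #(Finset.Icc (j - m) (j + n)) = m + n + 1 := by
    rw [Int.card_Icc]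
    omega
  refine (existsUnique_congr fun P => ?_).mp
    (existsUnique_degree_lt_intervalIntegral_eq (Finset.Icc (j - m) (j + n))
      (fun k _ => by linarith) ((pairwise_disjoint_Ioo_intCast_mul_sub_add_half Δx).set_pairwise _)
      fun k => f k * Δx)
  rw [hcard, ← mem_degreeLT, degreeLT_succ_eq_degreeLE, mem_degreeLE]
  simp only [Finset.mem_Icc, and_imp, one_div_mul_eq_div, div_eq_iff hΔx.ne']
end

section
/- Let Δx > 0, let j ∈ ℤ, let n ≥ 0, let f_j, …, f_{j+n+1} be real numbers, and let P be the unique polynomial of degree at most n whose cell averages over I_j, …, I_{j+n} equal f_j, …, f_{j+n}. Then the extrapolated discrepancy on the next cell to the right satisfies (1/Δx)∫_{I_{j+n+1}} P(x) dx − f_{j+n+1} = −∑_{i=0}^{n+1} (−1)^i · C(n+1, i) · f_{j+n+1−i}; in particular |(1/Δx)∫_{I_{j+n+1}} P(x) dx − f_{j+n+1}| equals the absolute value of the (n+1)-th order forward finite difference |∑_{i=0}^{n+1} (−1)^{n+1−i} C(n+1, i) f_{j+i}|. -/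
/-!
Averaging over a window of fixed width commutes with forward differences, and a forward
difference of a polynomial lowers its degree, so the `(n+1)`-th forward difference with step `Δx`
of the cell averages of a polynomial of degree at most `n` vanishes. Expanded as a binomial sum
over the cells `I_j, …, I_{j+n+1}`, this difference involves only the data `f` on all cells but
the last, which isolates the discrepancy on the last cell as minus the `(n+1)`-th forward
difference of `f`.
-/

open Finset Polynomial fwdDiff

theorem fwdDiff_iter_comp_addMonoidHom {M M' G : Type*} [AddCommMonoid M] [AddCommMonoid M']
    [AddCommGroup G] (φ : M →+ M') (f : M' → G) (h : M) (m : ℕ) :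
    Δ_[h] ^[m] (f ∘ φ) = Δ_[φ h] ^[m] f ∘ φ := by
  induction m generalizing f with
  | zero => rfl
  | succ m ih =>
    have hstep : Δ_[h] (f ∘ φ) = Δ_[φ h] f ∘ φ := by
      ext y
      simp [fwdDiff]
    rw [Function.iterate_succ_apply, hstep, ih, ← Function.iterate_succ_apply]

theorem Polynomial.fwdDiff_iter_eval_eq_zero_of_natDegree_lt {R : Type*} [CommRing R]
    {p : R[X]} {m : ℕ} (hp : p.natDegree < m) (h : R) : Δ_[h] ^[m] p.eval = 0 := by
  ext y
  set q : R[X] := p.comp (C h * X + C y)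
  have hq : (fun r => p.eval (r + y)) ∘ AddMonoidHom.mulLeft h = q.eval := by
    ext r
    simp [q]
  have hq_natDegree : q.natDegree < m := by
    refine (natDegree_comp_le.trans ?_).trans_lt hp
    simpa using Nat.mul_le_mul_left p.natDegree (natDegree_linear_le (b := y))
  calc Δ_[h] ^[m] p.eval y
      = Δ_[h] ^[m] (fun r => p.eval (r + y)) 0 := by
        simpa using (fwdDiff_iter_comp_add h p.eval y m 0).symm
    _ = Δ_[1] ^[m] q.eval 0 := by
      rw [← hq, fwdDiff_iter_comp_addMonoidHom, Function.comp_apply, map_zero,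
        AddMonoidHom.coe_mulLeft, mul_one]
    _ = 0 := by rw [fwdDiff_iter_eq_zero_of_degree_lt hq_natDegree, Pi.zero_apply]

theorem fwdDiff_intervalIntegral_window {E : Type*} [NormedAddCommGroup E] [NormedSpace ℝ E]
    {g : ℝ → E} (hg : Continuous g) (h c : ℝ) :
    Δ_[h] (fun t => ∫ x in (t - c)..(t + c), g x)
      = fun t => ∫ x in (t - c)..(t + c), Δ_[h] g x := by
  ext t
  simp only [fwdDiff]
  rw [intervalIntegral.integral_sub (f := fun x => g (x + h))
    ((hg.comp (continuous_add_const h)).intervalIntegrable _ _) (hg.intervalIntegrable _ _),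
    intervalIntegral.integral_comp_add_right g h]
  ring_nf

theorem fwdDiff_iter_intervalIntegral_window {E : Type*} [NormedAddCommGroup E]
    [NormedSpace ℝ E] {g : ℝ → E} (hg : Continuous g) (h c : ℝ) (m : ℕ) :
    Δ_[h] ^[m] (fun t => ∫ x in (t - c)..(t + c), g x)
      = fun t => ∫ x in (t - c)..(t + c), Δ_[h] ^[m] g x := by
  induction m generalizing g with
  | zero => rfl
  | succ m ih =>
    have hΔg : Continuous (Δ_[h] g) := (hg.comp (continuous_add_const h)).sub hg
    rw [Function.iterate_succ_apply, fwdDiff_intervalIntegral_window hg, ih hΔg,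
      ← Function.iterate_succ_apply]

theorem sub_eq_neg_fwdDiff_iter_of_fwdDiff_iter_eq_zero {M G : Type*} [AddCommMonoid M]
    [AddCommGroup G] {F Φ : M → G} {h y : M} {m : ℕ} (hF : Δ_[h] ^[m + 1] F y = 0)
    (hFΦ : ∀ k ≤ m, F (y + k • h) = Φ (y + k • h)) :
    F (y + (m + 1) • h) - Φ (y + (m + 1) • h) = -Δ_[h] ^[m + 1] Φ y := by
  have hlower :
      ∑ k ∈ range (m + 1), ((-1 : ℤ) ^ (m + 1 - k) * (m + 1).choose k) • F (y + k • h) =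
        ∑ k ∈ range (m + 1), ((-1 : ℤ) ^ (m + 1 - k) * (m + 1).choose k) • Φ (y + k • h) :=
    sum_congr rfl fun k hk => by rw [hFΦ k (Nat.lt_succ_iff.mp (mem_range.mp hk))]
  rw [fwdDiff_iter_eq_sum_shift, sum_range_succ] at hF ⊢
  simp only [Nat.sub_self, pow_zero, Nat.choose_self, Nat.cast_one, mul_one, one_smul] at hF ⊢
  rw [← hlower, eq_neg_of_add_eq_zero_right hF]
  abel

theorem fwdDiff_iter_int_eq_sum {R : Type*} [Ring R] (f : ℤ → R) (m : ℕ) (j : ℤ) :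
    Δ_[1] ^[m] f j
      = ∑ i ∈ range (m + 1), (-1 : R) ^ (m - i) * (m.choose i : R) * f (j + i) := by
  rw [fwdDiff_iter_eq_sum_shift]
  refine sum_congr rfl fun i _ => ?_
  rw [zsmul_eq_mul, nsmul_one]
  push_cast
  rfl

theorem fwdDiff_iter_int_eq_sum_reflect {R : Type*} [Ring R] (f : ℤ → R) (m : ℕ) (j : ℤ) :
    Δ_[1] ^[m] f j
      = ∑ i ∈ range (m + 1), (-1 : R) ^ i * (m.choose i : R) * f (j + m - i) := by
  rw [fwdDiff_iter_int_eq_sum, ← sum_range_reflect]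
  refine sum_congr rfl fun i hi => ?_
  have hi : i ≤ m := Nat.lt_succ_iff.mp (mem_range.mp hi)
  rw [Nat.add_sub_cancel, Nat.sub_sub_self hi, Nat.choose_symm hi, Nat.cast_sub hi]
  congr 2
  ring

theorem eno_ao_right_discrepancy_general
    (Δx : ℝ) (j : ℤ) (n : ℕ) (f : ℤ → ℝ)
    (P : Polynomial ℝ) (hdeg : P.degree ≤ (n : ℕ))
    (havg : ∀ i : ℕ, i ≤ n →
      (1 / Δx) * ∫ x in (((j : ℝ) + i) * Δx - Δx / 2)..(((j : ℝ) + i) * Δx + Δx / 2),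
        P.eval x = f (j + i)) :
    ((1 / Δx) * ∫ x in (((j : ℝ) + (n + 1)) * Δx - Δx / 2)..(((j : ℝ) + (n + 1)) * Δx + Δx / 2),
        P.eval x) - f (j + n + 1)
      = -∑ i ∈ Finset.range (n + 2),
          (-1 : ℝ) ^ i * ((n + 1).choose i : ℝ) * f (j + n + 1 - i) ∧
    |((1 / Δx) * ∫ x in (((j : ℝ) + (n + 1)) * Δx - Δx / 2)..(((j : ℝ) + (n + 1)) * Δx + Δx / 2),
        P.eval x) - f (j + n + 1)|
      = |∑ i ∈ Finset.range (n + 2),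
          (-1 : ℝ) ^ (n + 1 - i) * ((n + 1).choose i : ℝ) * f (j + i)| := by
  set F : ℤ → ℝ := fun i =>
    (1 / Δx) * ∫ x in ((i : ℝ) * Δx - Δx / 2)..((i : ℝ) * Δx + Δx / 2), P.eval x
  have hF : Δ_[1] ^[n + 1] F j = 0 := by
    have hF_comp : F = (1 / Δx) •
        ((fun t => ∫ x in (t - Δx / 2)..(t + Δx / 2), P.eval x) ∘ zmultiplesHom ℝ Δx) := by
      ext i
      simp [F, zsmul_eq_mul]
    rw [hF_comp, fwdDiff_iter_const_smul, fwdDiff_iter_comp_addMonoidHom,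
      fwdDiff_iter_intervalIntegral_window P.continuous,
      fwdDiff_iter_eval_eq_zero_of_natDegree_lt (Nat.lt_succ_of_le (natDegree_le_of_degree_le hdeg))]
    simp
  have hFf : ∀ k ≤ n, F (j + k • 1) = f (j + k • 1) := fun k hk => by
    simpa [F] using havg k hk
  have hlhs :
      ((1 / Δx) * ∫ x in (((j : ℝ) + (n + 1)) * Δx - Δx / 2)..
          (((j : ℝ) + (n + 1)) * Δx + Δx / 2), P.eval x) - f (j + n + 1)
        = F (j + (n + 1) • 1) - f (j + (n + 1) • 1) := by
    simp [F, add_assoc]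
  rw [hlhs, sub_eq_neg_fwdDiff_iter_of_fwdDiff_iter_eq_zero hF hFf]
  constructor
  · rw [fwdDiff_iter_int_eq_sum_reflect, Nat.cast_succ, ← add_assoc]
  · rw [abs_neg, fwdDiff_iter_int_eq_sum]

/-- The extrapolated discrepancy of the reconstruction polynomial on the next cell to
the right equals (minus) an `(n+1)`-th order finite difference of the data; in
particular its absolute value equals the absolute value of the `(n+1)`-th order
forward finite difference. -/
theorem eno_ao_right_discrepancy
    (Δx : ℝ) (hΔx : 0 < Δx) (j : ℤ) (n : ℕ) (f : ℤ → ℝ)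
    (P : Polynomial ℝ) (hdeg : P.degree ≤ (n : ℕ))
    (havg : ∀ i : ℕ, i ≤ n →
      (1 / Δx) * ∫ x in (((j : ℝ) + i) * Δx - Δx / 2)..(((j : ℝ) + i) * Δx + Δx / 2),
        P.eval x = f (j + i)) :
    ((1 / Δx) * ∫ x in (((j : ℝ) + (n + 1)) * Δx - Δx / 2)..(((j : ℝ) + (n + 1)) * Δx + Δx / 2),
        P.eval x) - f (j + n + 1)
      = -∑ i ∈ Finset.range (n + 2),
          (-1 : ℝ) ^ i * ((n + 1).choose i : ℝ) * f (j + n + 1 - i) ∧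
    |((1 / Δx) * ∫ x in (((j : ℝ) + (n + 1)) * Δx - Δx / 2)..(((j : ℝ) + (n + 1)) * Δx + Δx / 2),
        P.eval x) - f (j + n + 1)|
      = |∑ i ∈ Finset.range (n + 2),
          (-1 : ℝ) ^ (n + 1 - i) * ((n + 1).choose i : ℝ) * f (j + i)| :=
  eno_ao_right_discrepancy_general Δx j n f P hdeg havg
end

section
/- Let Δx > 0, let j ∈ ℤ, let n ≥ 0, let f_{j-1}, f_j, …, f_{j+n} be real numbers, and let P be the unique polynomial of degree at most n whose cell averages over I_j, …, I_{j+n} equal f_j, …, f_{j+n}. Then the extrapolated discrepancy on the next cell to the left satisfies |(1/Δx)∫_{I_{j-1}} P(x) dx − f_{j-1}| = |∑_{i=0}^{n+1} (−1)^i · C(n+1, i) · f_{j−1+i}|, i.e., it equals the absolute value of the (n+1)-th order finite difference of the data f_{j-1}, …, f_{j+n}. -/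
/-!
If `Q` is a primitive of `P`, the cell average of `P` centred at `y * Δx` is `G (y + 1) - G y` with
`G t = Q ((t - 1/2) * Δx) / Δx`. So the cell averages form the forward difference of a polynomial
of degree `≤ n + 1`, and their `(n+1)`-th forward difference vanishes. As the data agree with the
cell averages on `I_j, …, I_{j+n}`, only the term of `I_{j-1}` survives in the alternating binomial
sum, and it is the discrepancy.
-/

open Polynomial Finset fwdDiff

namespace Polynomial

variable {K : Type*} [Field K]

noncomputable def antideriv (P : K[X]) : K[X] :=
  ∑ m ∈ range (P.natDegree + 1), C (P.coeff m / (m + 1)) * X ^ (m + 1)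

theorem derivative_antideriv [CharZero K] (P : K[X]) : derivative (antideriv P) = P := by
  conv_rhs => rw [P.as_sum_range_C_mul_X_pow]
  simp only [antideriv, derivative_sum, derivative_C_mul_X_pow]
  refine sum_congr rfl fun m _ => ?_
  push_cast
  exact congrArg (C · * X ^ m) (div_mul_cancel₀ _ (Nat.cast_add_one_ne_zero m))

theorem natDegree_antideriv_le (P : K[X]) : (antideriv P).natDegree ≤ P.natDegree + 1 :=
  natDegree_sum_le_of_forall_le _ _ fun _ hm =>
    (natDegree_C_mul_X_pow_le _ _).trans (Nat.succ_le_succ (Nat.lt_succ_iff.mp (mem_range.mp hm)))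

theorem integral_eval_eq_sub_antideriv (P : ℝ[X]) (a b : ℝ) :
    ∫ x in a..b, P.eval x = (antideriv P).eval b - (antideriv P).eval a :=
  intervalIntegral.integral_eq_sub_of_hasDerivAt
    (fun x _ => by simpa only [derivative_antideriv] using (antideriv P).hasDerivAt x)
    (P.continuous.intervalIntegrable _ _)

end Polynomial

theorem sum_neg_one_pow_mul_choose_mul_eq_zero_of_fwdDiff_iter {R : Type*} [CommRing R]
    {f : R → R} {m : ℕ} {y : R} (h : (Δ_[1])^[m] f y = 0) :
    ∑ k ∈ range (m + 1), (-1 : R) ^ k * m.choose k * f (y + k) = 0 := by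
  rw [fwdDiff_iter_eq_sum_shift] at h
  rw [← mul_zero ((-1 : R) ^ m), ← h, mul_sum]
  refine sum_congr rfl fun k hk => ?_
  obtain ⟨d, rfl⟩ := Nat.exists_eq_add_of_le (Nat.lt_succ_iff.mp (mem_range.mp hk))
  have hsign : (-1 : R) ^ k = (-1) ^ (k + d) * (-1) ^ d := by
    rw [pow_add, mul_assoc, ← pow_add, Even.neg_one_pow ⟨d, rfl⟩, mul_one]
  simp only [Nat.add_sub_cancel_left, nsmul_eq_mul, mul_one, zsmul_eq_mul, hsign]
  push_cast
  ring

noncomputable def cellAverage (Δx : ℝ) (P : ℝ[X]) (y : ℝ) : ℝ :=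
  (1 / Δx) * ∫ x in (y * Δx - Δx / 2)..(y * Δx + Δx / 2), P.eval x

theorem cellAverage_eq_fwdDiff (Δx : ℝ) (P : ℝ[X]) :
    cellAverage Δx P = Δ_[1] (C (1 / Δx) * (antideriv P).comp (C Δx * X - C (Δx / 2))).eval := by
  ext y
  simp only [cellAverage, fwdDiff, integral_eval_eq_sub_antideriv, eval_mul, eval_C, eval_comp,
    eval_sub, eval_X]
  ring_nf

theorem fwdDiff_iter_cellAverage_eq_zero (Δx : ℝ) {P : ℝ[X]} {n : ℕ} (hP : P.natDegree ≤ n) :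
    (Δ_[1])^[n + 1] (cellAverage Δx P) = 0 := by
  rw [cellAverage_eq_fwdDiff, ← Function.iterate_succ_apply]
  refine fwdDiff_iter_eq_zero_of_degree_lt ?_
  calc _ ≤ (antideriv P).natDegree * 1 :=
        (natDegree_C_mul_le _ _).trans <| natDegree_comp_le.trans <|
          Nat.mul_le_mul_left _ (by compute_degree)
    _ < n + 2 := by have := natDegree_antideriv_le P; omega

theorem eno_ao_left_discrepancy_general
    (Δx : ℝ) (j : ℤ) (n : ℕ) (f : ℤ → ℝ)
    (P : Polynomial ℝ) (hdeg : P.degree ≤ (n : ℕ))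
    (havg : ∀ i : ℕ, i ≤ n →
      (1 / Δx) * ∫ x in (((j : ℝ) + i) * Δx - Δx / 2)..(((j : ℝ) + i) * Δx + Δx / 2),
        P.eval x = f (j + i)) :
    |((1 / Δx) * ∫ x in (((j : ℝ) - 1) * Δx - Δx / 2)..(((j : ℝ) - 1) * Δx + Δx / 2),
        P.eval x) - f (j - 1)|
      = |∑ i ∈ Finset.range (n + 2),
          (-1 : ℝ) ^ i * ((n + 1).choose i : ℝ) * f (j - 1 + i)| := by
  have hdata : ∀ k ∈ range (n + 1),
      cellAverage Δx P ((j : ℝ) - 1 + ((k + 1 : ℕ) : ℝ)) = f (j - 1 + ((k + 1 : ℕ) : ℤ)) := by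
    intro k hk
    push_cast
    rw [show (j : ℝ) - 1 + (k + 1) = j + k by ring, show j - 1 + (k + 1) = j + k by ring]
    exact havg k (Nat.lt_succ_iff.mp (mem_range.mp hk))
  have hzero := sum_neg_one_pow_mul_choose_mul_eq_zero_of_fwdDiff_iter
    (congrFun (fwdDiff_iter_cellAverage_eq_zero Δx (natDegree_le_of_degree_le hdeg)) ((j : ℝ) - 1))
  rw [sum_range_succ'] at hzero ⊢
  rw [sum_congr rfl fun k hk => by rw [hdata k hk]] at hzero
  change |cellAverage Δx P ((j : ℝ) - 1) - f (j - 1)| = _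
  simp only [pow_zero, Nat.choose_zero_right, Nat.cast_one, one_mul, CharP.cast_eq_zero,
    add_zero] at hzero ⊢
  rw [abs_sub_comm]
  congr 1
  linarith

/-- The extrapolated discrepancy of the reconstruction polynomial on the next cell to
the left has absolute value equal to the absolute value of the `(n+1)`-th order finite
difference of the data `f_{j-1}, …, f_{j+n}`. -/
theorem eno_ao_left_discrepancy
    (Δx : ℝ) (hΔx : 0 < Δx) (j : ℤ) (n : ℕ) (f : ℤ → ℝ)
    (P : Polynomial ℝ) (hdeg : P.degree ≤ (n : ℕ))
    (havg : ∀ i : ℕ, i ≤ n →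
      (1 / Δx) * ∫ x in (((j : ℝ) + i) * Δx - Δx / 2)..(((j : ℝ) + i) * Δx + Δx / 2),
        P.eval x = f (j + i)) :
    |((1 / Δx) * ∫ x in (((j : ℝ) - 1) * Δx - Δx / 2)..(((j : ℝ) - 1) * Δx + Δx / 2),
        P.eval x) - f (j - 1)|
      = |∑ i ∈ Finset.range (n + 2),
          (-1 : ℝ) ^ i * ((n + 1).choose i : ℝ) * f (j - 1 + i)| :=
  eno_ao_left_discrepancy_general Δx j n f P hdeg havg
end

section
/- For every real κ, −5/6 + (5/4)·cos κ − (1/2)·cos 2κ + (1/12)·cos 3κ ≤ 0; that is, the imaginary part of the modified wavenumber of the fourth-order scheme on the stencil S_{j-2}^{j+1} is nonpositive for all wavenumbers, so this scheme is linearly stable. -/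
theorem cos_stencil_combination_eq_cube (κ : ℝ) :
    -5 / 6 + (5 / 4) * Real.cos κ - (1 / 2) * Real.cos (2 * κ) + (1 / 12) * Real.cos (3 * κ) =
      (Real.cos κ - 1) ^ 3 / 3 := by
  rw [Real.cos_two_mul, Real.cos_three_mul]
  ring

/-- Linear stability of the fourth-order scheme on `S_{j-2}^{j+1}`: the imaginary part of its modified wavenumber is nonpositive for all wavenumbers. -/
theorem linear_stability_S_jm2_jp1 (κ : ℝ) :
    -5 / 6 + (5 / 4) * Real.cos κ - (1 / 2) * Real.cos (2 * κ) + (1 / 12) * Real.cos (3 * κ) ≤ 0 := by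
  rw [cos_stencil_combination_eq_cube]
  have hcos : Real.cos κ - 1 ≤ 0 := sub_nonpos.2 (Real.cos_le_one κ)
  exact div_nonpos_of_nonpos_of_nonneg (Odd.pow_nonpos (by decide) hcos) (by norm_num)
end

section
/- For every real κ, −1/3 + (1/2)·cos κ − (1/5)·cos 2κ + (1/30)·cos 3κ ≤ 0; that is, the imaginary part of the modified wavenumber of the fifth-order central scheme on the stencil S_{j-2}^{j+2} is nonpositive for all wavenumbers, so this scheme is linearly stable. -/
open Real

lemma fifth_order_dissipation_eq_cube (κ : ℝ) :
    -1 / 3 + (1 / 2) * cos κ - (1 / 5) * cos (2 * κ) + (1 / 30) * cos (3 * κ) =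
      2 / 15 * (cos κ - 1) ^ 3 := by
  rw [cos_two_mul, cos_three_mul]
  ring

/-- Linear stability of the fifth-order central scheme on `S_{j-2}^{j+2}`: the imaginary part of its modified wavenumber is nonpositive for all wavenumbers. -/
theorem linear_stability_S_jm2_jp2 (κ : ℝ) :
    -1 / 3 + (1 / 2) * Real.cos κ - (1 / 5) * Real.cos (2 * κ) + (1 / 30) * Real.cos (3 * κ) ≤ 0 := by
  rw [fifth_order_dissipation_eq_cube]
  have hc : cos κ - 1 ≤ 0 := sub_nonpos.2 (cos_le_one κ)
  exact mul_nonpos_of_nonneg_of_nonpos (by norm_num) (Odd.pow_nonpos (by decide) hc)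
end

section
/- For every real κ, −7/12 + (14/15)·cos κ − (7/15)·cos 2κ + (2/15)·cos 3κ − (1/60)·cos 4κ ≤ 0; that is, the imaginary part of the modified wavenumber of the sixth-order scheme on the stencil S_{j-3}^{j+2} is nonpositive for all wavenumbers, so this scheme is linearly stable. -/
/-! In `c = cos κ` the expression is a polynomial of degree four (Chebyshev), and it collapses to
`-(2/15) (1 - c)^4`: the scheme's dissipation vanishes to fourth order at `c = 1` and is
nonpositive everywhere. -/

open Real

theorem Real.cos_four_mul (x : ℝ) : cos (4 * x) = 8 * cos x ^ 4 - 8 * cos x ^ 2 + 1 := by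
  rw [show 4 * x = 2 * (2 * x) by ring, cos_two_mul, cos_two_mul]
  ring

theorem modifiedWavenumber_im_S_jm3_jp2_eq (κ : ℝ) :
    -7 / 12 + (14 / 15) * cos κ - (7 / 15) * cos (2 * κ) + (2 / 15) * cos (3 * κ)
      - (1 / 60) * cos (4 * κ) = -(2 / 15 * (1 - cos κ) ^ 4) := by
  rw [cos_two_mul, cos_three_mul, cos_four_mul]
  ring

/-- Linear stability of the sixth-order scheme on `S_{j-3}^{j+2}`: the imaginary part of its modified wavenumber is nonpositive for all wavenumbers. -/
theorem linear_stability_S_jm3_jp2 (κ : ℝ) :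
    -7 / 12 + (14 / 15) * Real.cos κ - (7 / 15) * Real.cos (2 * κ) + (2 / 15) * Real.cos (3 * κ) - (1 / 60) * Real.cos (4 * κ) ≤ 0 := by
  rw [modifiedWavenumber_im_S_jm3_jp2_eq]
  exact neg_nonpos.mpr (by positivity)
end

section
/- Let n ≥ 0, let Δx > 0, let j ∈ ℤ, and let h : ℝ → ℝ be (n+1)-times continuously differentiable on an interval containing the cells I_j, …, I_{j+n+1}, with |h^{(n+1)}(ξ)| ≤ M on that interval. If f_k = (1/Δx)∫_{I_k} h(x) dx are the exact cell averages of h, then the (n+1)-th order finite difference of the cell averages satisfies |∑_{i=0}^{n+1} (−1)^{n+1−i} C(n+1, i) f_{j+i}| ≤ M·Δx^{n+1}. In particular, the smoothness indicator of the ENO-AO scheme on a stencil of n+1 cells where h is C^{n+1} is of order O(Δx^{n+1}). -/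
/-!
Let `F` be the primitive of `h` from the left end `a` of the stencil. The integral of `h` over
the cell `I_{j+i}` is the forward difference `Δ F (a + i Δx)`, so the `(n+1)`-th difference of
the cell averages is `Δ^(n+2) F (a) / Δx`, and `F^(n+2) = h^(n+1)`. It remains to see that
`|Δ^m g| ≤ sup |g^(m)| · Δx^m`: since `Δ^m` commutes with differentiation, this follows by
induction on `m` from the mean value inequality applied to `Δ^m g` on `[y, y + Δx]`.
-/

open Finset Set

lemma fwdDiff_iter_real_eq_sum (Δx : ℝ) (g : ℝ → ℝ) (m : ℕ) (y : ℝ) :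
    (fwdDiff Δx)^[m] g y
      = ∑ k ∈ range (m + 1), (-1 : ℝ) ^ (m - k) * (m.choose k : ℝ) * g (y + k * Δx) := by
  rw [fwdDiff_iter_eq_sum_shift]
  refine sum_congr rfl fun k _ => ?_
  push_cast [zsmul_eq_mul, nsmul_eq_mul]
  ring

lemma hasDerivWithinAt_fwdDiff_iter {g g' : ℝ → ℝ} {s t : Set ℝ} {Δx z : ℝ} {m : ℕ}
    (hg : ∀ k ≤ m, HasDerivWithinAt g (g' (z + k * Δx)) s (z + k * Δx))
    (hts : ∀ k ≤ m, MapsTo (· + k * Δx) t s) :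
    HasDerivWithinAt ((fwdDiff Δx)^[m] g) ((fwdDiff Δx)^[m] g' z) t z := by
  rw [funext (fwdDiff_iter_real_eq_sum Δx g m), fwdDiff_iter_real_eq_sum]
  refine HasDerivWithinAt.fun_sum fun k hk => ?_
  have hkm : k ≤ m := Nat.lt_succ_iff.mp (mem_range.mp hk)
  simpa using ((hg k hkm).comp z ((hasDerivAt_id z).add_const _).hasDerivWithinAt
    (hts k hkm)).const_mul ((-1 : ℝ) ^ (m - k) * (m.choose k : ℝ))

theorem abs_fwdDiff_iter_le {a b Δx M : ℝ} (hΔx : 0 < Δx) {m : ℕ} {g : ℝ → ℝ}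
    (hg : ContDiffOn ℝ m g (Icc a b))
    (hM : ∀ ξ ∈ Icc a b, |iteratedDerivWithin m g (Icc a b) ξ| ≤ M)
    {y : ℝ} (hay : a ≤ y) (hyb : y + m * Δx ≤ b) :
    |(fwdDiff Δx)^[m] g y| ≤ M * Δx ^ m := by
  induction m generalizing g y with
  | zero => simpa using hM y ⟨hay, by simpa using hyb⟩
  | succ m ih =>
    push_cast at hyb
    have hm : (0 : ℝ) ≤ m := m.cast_nonneg
    have hud : UniqueDiffOn ℝ (Icc a b) := uniqueDiffOn_Icc (by nlinarith)
    set G := derivWithin g (Icc a b)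
    have hG : ContDiffOn ℝ m G (Icc a b) := hg.derivWithin hud (by push_cast; rfl)
    have hGM : ∀ ξ ∈ Icc a b, |iteratedDerivWithin m G (Icc a b) ξ| ≤ M := fun ξ hξ => by
      rw [← iteratedDerivWithin_succ']
      exact hM ξ hξ
    have hderiv : ∀ z ∈ Icc y (y + Δx), HasDerivWithinAt ((fwdDiff Δx)^[m] g)
        ((fwdDiff Δx)^[m] G z) (Icc y (y + Δx)) z := by
      refine fun z hz => hasDerivWithinAt_fwdDiff_iter (s := Icc a b)
        (fun k hk => ?_) (fun k hk w hw => ?_)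
      all_goals
        have hkm : (k : ℝ) ≤ m := by exact_mod_cast hk
        have hk0 : (0 : ℝ) ≤ k := k.cast_nonneg
      · refine (hg.differentiableOn (by simp) _ ⟨?_, ?_⟩).hasDerivWithinAt <;>
          nlinarith [hz.1, hz.2]
      · constructor <;> nlinarith [hw.1, hw.2]
    have hbound : ∀ z ∈ Ico y (y + Δx), ‖(fwdDiff Δx)^[m] G z‖ ≤ M * Δx ^ m := fun z hz =>
      ih hG hGM (by linarith [hz.1]) (by linarith [hz.2])
    have hmvt := norm_image_sub_le_of_norm_deriv_le_segment' hderiv hbound (y + Δx)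
      ⟨by linarith, le_rfl⟩
    rw [Function.iterate_succ_apply', fwdDiff, pow_succ, ← mul_assoc]
    simpa using hmvt

section Primitive

variable {h : ℝ → ℝ} {a b : ℝ}

lemma hasDerivWithinAt_integral_Icc (hh : ContinuousOn h (Icc a b)) {x : ℝ} (hx : x ∈ Icc a b) :
    HasDerivWithinAt (fun u => ∫ t in a..u, h t) (h x) (Icc a b) x :=
  -- `Fact (x ∈ Icc a b)` is what the `FTCFilter` instance for `𝓝[Icc a b] x` needs
  have := Fact.mk hx
  intervalIntegral.integral_hasDerivWithinAt_right
    ((hh.mono (Icc_subset_Icc le_rfl hx.2)).intervalIntegrable_of_Icc hx.1)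
    (hh.stronglyMeasurableAtFilter_nhdsWithin measurableSet_Icc x) (hh.continuousWithinAt hx)

lemma derivWithin_integral_Icc_eqOn (hab : a < b) (hh : ContinuousOn h (Icc a b)) :
    EqOn (derivWithin (fun u => ∫ t in a..u, h t) (Icc a b)) h (Icc a b) := fun x hx =>
  (hasDerivWithinAt_integral_Icc hh hx).derivWithin (uniqueDiffOn_Icc hab x hx)

theorem ContDiffOn.integral_Icc (hab : a < b) {n : ℕ} (hh : ContDiffOn ℝ n h (Icc a b)) :
    ContDiffOn ℝ (n + 1 : ℕ) (fun u => ∫ t in a..u, h t) (Icc a b) := by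
  push_cast
  exact (contDiffOn_succ_iff_derivWithin (uniqueDiffOn_Icc hab)).2
    ⟨fun x hx => (hasDerivWithinAt_integral_Icc hh.continuousOn hx).differentiableWithinAt,
      by simp, hh.congr (derivWithin_integral_Icc_eqOn hab hh.continuousOn)⟩

lemma iteratedDerivWithin_succ_integral_Icc (hab : a < b) (hh : ContinuousOn h (Icc a b))
    (n : ℕ) : EqOn (iteratedDerivWithin (n + 1) (fun u => ∫ t in a..u, h t) (Icc a b))
      (iteratedDerivWithin n h (Icc a b)) (Icc a b) := by
  rw [iteratedDerivWithin_succ']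
  exact iteratedDerivWithin_congr (derivWithin_integral_Icc_eqOn hab hh)

lemma integral_eq_fwdDiff_integral (hh : ContinuousOn h (Icc a b)) {c Δx : ℝ} (hac : a ≤ c)
    (hΔx : 0 ≤ Δx) (hcb : c + Δx ≤ b) :
    ∫ x in c..c + Δx, h x = fwdDiff Δx (fun u => ∫ t in a..u, h t) c := by
  have hint : ∀ d ∈ Icc a b, IntervalIntegrable h MeasureTheory.volume a d := fun d hd =>
    (hh.mono (Icc_subset_Icc le_rfl hd.2)).intervalIntegrable_of_Icc hd.1
  rw [fwdDiff, intervalIntegral.integral_interval_sub_left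
    (hint _ ⟨by linarith, hcb⟩) (hint _ ⟨hac, by linarith⟩)]

end Primitive

/-- If `h` is `(n+1)`-times continuously differentiable on the interval covering the
cells `I_j, …, I_{j+n+1}`, with `(n+1)`-th derivative bounded by `M`, and `f_k` are the
exact cell averages of `h`, then the `(n+1)`-th order finite difference of the cell
averages is bounded by `M·Δx^(n+1)`; hence the ENO-AO smoothness indicator on a smooth
stencil is `O(Δx^(n+1))`. -/
theorem smoothness_indicator_smooth_bound
    (n : ℕ) (Δx : ℝ) (hΔx : 0 < Δx) (j : ℤ) (M : ℝ) (h : ℝ → ℝ) (f : ℤ → ℝ)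
    (hsmooth : ContDiffOn ℝ (n + 1) h
      (Set.Icc ((j : ℝ) * Δx - Δx / 2) (((j : ℝ) + (n + 1)) * Δx + Δx / 2)))
    (hbound : ∀ ξ ∈ Set.Icc ((j : ℝ) * Δx - Δx / 2) (((j : ℝ) + (n + 1)) * Δx + Δx / 2),
      |iteratedDerivWithin (n + 1) h
        (Set.Icc ((j : ℝ) * Δx - Δx / 2) (((j : ℝ) + (n + 1)) * Δx + Δx / 2)) ξ| ≤ M)
    (hf : ∀ i : ℕ, i ≤ n + 1 →
      f (j + i) = (1 / Δx) * ∫ x in (((j : ℝ) + i) * Δx - Δx / 2)..(((j : ℝ) + i) * Δx + Δx / 2), h x) :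
    |∑ i ∈ Finset.range (n + 2),
        (-1 : ℝ) ^ (n + 1 - i) * ((n + 1).choose i : ℝ) * f (j + i)|
      ≤ M * Δx ^ (n + 1) := by
  set a : ℝ := (j : ℝ) * Δx - Δx / 2
  set b : ℝ := ((j : ℝ) + (n + 1)) * Δx + Δx / 2
  have hba : b = a + (n + 2) * Δx := by ring
  have hab : a < b := by rw [hba]; exact lt_add_of_pos_right a (by positivity)
  have hh : ContinuousOn h (Icc a b) := hsmooth.continuousOn
  set F : ℝ → ℝ := fun u => ∫ t in a..u, h t
  have hcell : ∀ i ≤ n + 1, f (j + i) = fwdDiff Δx F (a + i * Δx) / Δx := by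
    intro i hi
    have hi' : (i : ℝ) ≤ n + 1 := by exact_mod_cast hi
    have hlo : ((j : ℝ) + i) * Δx - Δx / 2 = a + i * Δx := by ring
    have hhi : ((j : ℝ) + i) * Δx + Δx / 2 = a + i * Δx + Δx := by ring
    rw [hf i hi, hlo, hhi, one_div, inv_mul_eq_div, integral_eq_fwdDiff_integral hh
      (le_add_of_nonneg_right (by positivity)) hΔx.le (by rw [hba]; nlinarith)]
  have hsum : ∑ i ∈ range (n + 2), (-1 : ℝ) ^ (n + 1 - i) * ((n + 1).choose i : ℝ) * f (j + i)
      = (fwdDiff Δx)^[n + 2] F a / Δx := by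
    rw [Function.iterate_succ_apply, fwdDiff_iter_real_eq_sum, sum_div]
    refine sum_congr rfl fun i hi => ?_
    rw [hcell i (Nat.lt_succ_iff.mp (mem_range.mp hi))]
    ring
  have hdiff : |(fwdDiff Δx)^[n + 2] F a| ≤ M * Δx ^ (n + 2) :=
    abs_fwdDiff_iter_le hΔx (ContDiffOn.integral_Icc hab (n := n + 1) (by exact_mod_cast hsmooth))
      (fun ξ hξ => iteratedDerivWithin_succ_integral_Icc hab hh (n + 1) hξ ▸ hbound ξ hξ)
      le_rfl (by push_cast; linarith)
  rw [hsum, abs_div, abs_of_pos hΔx, div_le_iff₀ hΔx]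
  calc _ ≤ M * Δx ^ (n + 2) := hdiff
    _ = M * Δx ^ (n + 1) * Δx := by ring
end

section
/- Let n ≥ 0, let a, b be real numbers, let j ∈ ℤ, and let 0 ≤ r ≤ n. Suppose the cell-average data contain a single jump inside the stencil: f_{j+i} = a for 0 ≤ i ≤ r and f_{j+i} = b for r+1 ≤ i ≤ n+1. Then the (n+1)-th order finite difference of the data satisfies ∑_{i=0}^{n+1} (−1)^i C(n+1, i) f_{j+i} = (−1)^r C(n, r)·(a − b); in particular its absolute value equals C(n, r)·|a − b|, which is bounded below by |a − b| and does not tend to zero as the mesh is refined. This is the sense in which the ENO-AO smoothness indicator of a stencil containing a discontinuity is O(1). -/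
open Finset

theorem alternating_sum_range_choose_eq_choose_cast {R : Type*} [Ring R] (n m : ℕ) :
    ∑ k ∈ range (m + 1), (-1 : R) ^ k * ((n + 1).choose k : R) = (-1) ^ m * (n.choose m : R) := by
  exact_mod_cast congrArg (Int.cast : ℤ → R) Int.alternating_sum_range_choose_eq_choose

/-- The total alternating sum vanishes, so the constant level `b` after the jump contributes
only through the partial sum up to the jump, with the opposite sign. -/
theorem alternating_sum_choose_mul_of_jump {R : Type*} [CommRing R] {n r : ℕ} (hr : r ≤ n + 1)
    {g : ℕ → R} {a b : R} (ha : ∀ i ≤ r, g i = a) (hb : ∀ i, r + 1 ≤ i → i ≤ n + 1 → g i = b) :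
    ∑ i ∈ range (n + 2), (-1 : R) ^ i * ((n + 1).choose i : R) * g i
      = (-1) ^ r * (n.choose r : R) * (a - b) := by
  set c : ℕ → R := fun i => (-1 : R) ^ i * ((n + 1).choose i : R)
  have h_low : ∑ i ∈ range (r + 1), c i * g i = (-1) ^ r * (n.choose r : R) * a := by
    rw [sum_congr rfl fun i hi => by rw [ha i (Nat.lt_succ_iff.mp (mem_range.mp hi))], ← sum_mul,
      alternating_sum_range_choose_eq_choose_cast]
  have h_total : ∑ i ∈ range (n + 2), c i = 0 := by
    rw [alternating_sum_range_choose_eq_choose_cast, Nat.choose_succ_self, Nat.cast_zero, mul_zero]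
  have h_high : ∑ i ∈ Ico (r + 1) (n + 2), c i * g i = -((-1) ^ r * (n.choose r : R) * b) := by
    have h_split := sum_range_add_sum_Ico c (show r + 1 ≤ n + 2 by omega)
    rw [h_total, alternating_sum_range_choose_eq_choose_cast] at h_split
    rw [sum_congr rfl fun i hi => by rw [hb i (mem_Ico.mp hi).1 (by grind)], ← sum_mul,
      eq_neg_of_add_eq_zero_right h_split, neg_mul]
  rw [← sum_range_add_sum_Ico _ (show r + 1 ≤ n + 2 by omega), h_low, h_high]
  ring

/-- If the cell-average data have a single jump inside the stencil (`f_{j+i} = a` for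
`i ≤ r` and `f_{j+i} = b` for `r+1 ≤ i ≤ n+1`), then the `(n+1)`-th order finite
difference equals `(−1)^r·C(n,r)·(a−b)`; its absolute value is `C(n,r)·|a−b| ≥ |a−b|`,
so the ENO-AO smoothness indicator of a stencil containing a discontinuity is `O(1)`. -/
theorem smoothness_indicator_discontinuity
    (n : ℕ) (a b : ℝ) (j : ℤ) (r : ℕ) (hr : r ≤ n) (f : ℤ → ℝ)
    (ha : ∀ i : ℕ, i ≤ r → f (j + i) = a)
    (hb : ∀ i : ℕ, r + 1 ≤ i → i ≤ n + 1 → f (j + i) = b) :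
    (∑ i ∈ Finset.range (n + 2), (-1 : ℝ) ^ i * ((n + 1).choose i : ℝ) * f (j + i)
        = (-1 : ℝ) ^ r * (n.choose r : ℝ) * (a - b)) ∧
    |∑ i ∈ Finset.range (n + 2), (-1 : ℝ) ^ i * ((n + 1).choose i : ℝ) * f (j + i)|
        = (n.choose r : ℝ) * |a - b| ∧
    |a - b| ≤ (n.choose r : ℝ) * |a - b| := by
  have h_diff := alternating_sum_choose_mul_of_jump (g := fun i : ℕ => f (j + i)) (by omega) ha hb
  have h_choose : (1 : ℝ) ≤ n.choose r := by exact_mod_cast Nat.choose_pos hr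
  refine ⟨h_diff, ?_, le_mul_of_one_le_left (abs_nonneg _) h_choose⟩
  rw [h_diff, abs_mul, abs_mul, abs_pow, abs_neg, abs_one, one_pow, one_mul, Nat.abs_cast]
end
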